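/- arXiv:2203.07926 — 5 statements merged into one kernel-verified Lean document; each statement's English description precedes it below -/
import Mathlib

section
/- Uniqueness part of Theorem 3.1, in the rescaled variables used in its proof: Let n ≥ 1 and let Γ be a subgroup of the isometry group of Euclidean space ℝⁿ whose orbit space ℝⁿ/Γ is compact. Let v₀ : ℝⁿ → ℝ be Γ-periodic, everywhere positive and continuous. Suppose v₁ and v₂ are both functions from [0,∞) × ℝⁿ to ℝ which are continuous on [0,∞) × ℝⁿ, infinitely differentiable on (0,∞) × ℝⁿ, everywhere positive, Γ-periodic in the spatial variable for every s ≥ 0, solve ∂v/∂s = v⁻² Δv − 2 v⁻³ |∇v|² on (0,∞) × ℝⁿ, and satisfy v₁(0,·) = v₂(0,·) = v₀. Then v₁ = v₂. -/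
open scoped RealInnerProductSpace

noncomputable section

/-- The Euclidean Laplacian: the sum of the second partial derivatives. -/
def lap {n : ℕ} (f : EuclideanSpace ℝ (Fin n) → ℝ) (x : EuclideanSpace ℝ (Fin n)) : ℝ :=
  ∑ i : Fin n,
    fderiv ℝ (fun y => fderiv ℝ f y (EuclideanSpace.single i 1)) x (EuclideanSpace.single i 1)

/-- The natural action of the isometry group of Euclidean space on Euclidean space. -/
instance isomAction {n : ℕ} :
    MulAction (EuclideanSpace ℝ (Fin n) ≃ᵢ EuclideanSpace ℝ (Fin n))
      (EuclideanSpace ℝ (Fin n)) where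
  smul g x := g x
  one_smul _ := rfl
  mul_smul _ _ _ := rfl

/-!
Both solutions solve the divergence-form equation `∂ₛv = Δ(-1/v)`. For `ε > 0` the rescaling
`w(s, x) = c(s) v₂(θ(s), x)` with `c = 1 + ε(1 + s)` and `θ' = c⁻²` is a strict supersolution
lying above `v₁` at time `0`. If `v₁` ever reached `w`, compactness of `ℝⁿ/Γ` would give a first
touching point; there `v₁ - w` is nondecreasing in time, while `-1/v₁ ≤ -1/w` touch in space, so
`Δ(-1/v₁) ≤ Δ(-1/w)`, contradicting strictness. Letting `ε → 0` gives `v₁ ≤ v₂`, and by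
symmetry `v₁ = v₂`.
-/

open Filter Set Topology

theorem IsOpenMap.exists_isCompact_surjOn {X Y : Type*} [TopologicalSpace X]
    [WeaklyLocallyCompactSpace X] [TopologicalSpace Y] [CompactSpace Y] {f : X → Y}
    (hf : IsOpenMap f) (hsurj : Function.Surjective f) :
    ∃ K : Set X, IsCompact K ∧ SurjOn f K univ := by
  choose N hNc hN using fun x : X => exists_compact_mem_nhds x
  obtain ⟨t, ht⟩ := isCompact_univ.elim_finite_subcover (fun x => f '' interior (N x))
    (fun x => hf _ isOpen_interior) fun y _ => by
      obtain ⟨x, rfl⟩ := hsurj y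
      exact mem_iUnion.2 ⟨x, mem_image_of_mem f (mem_interior_iff_mem_nhds.2 (hN x))⟩
  refine ⟨⋃ x ∈ t, N x, t.isCompact_biUnion fun x _ => hNc x, fun y hy => ?_⟩
  obtain ⟨x, hx, z, hz, rfl⟩ := mem_iUnion₂.1 (ht hy)
  exact ⟨z, mem_iUnion₂.2 ⟨x, hx, interior_subset hz⟩, rfl⟩

instance Subgroup.continuousConstSMul {G X : Type*} [Group G] [MulAction G X] [TopologicalSpace X]
    [ContinuousConstSMul G X] (H : Subgroup G) : ContinuousConstSMul H X :=
  ⟨fun h => continuous_const_smul (h : G)⟩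

instance {n : ℕ} :
    ContinuousConstSMul (EuclideanSpace ℝ (Fin n) ≃ᵢ EuclideanSpace ℝ (Fin n))
      (EuclideanSpace ℝ (Fin n)) :=
  ⟨fun g => g.continuous⟩

theorem exists_isCompact_forall_exists_smul_mem {G X : Type*} [Group G] [MulAction G X]
    [TopologicalSpace X] [WeaklyLocallyCompactSpace X] [ContinuousConstSMul G X]
    [CompactSpace (Quotient (MulAction.orbitRel G X))] :
    ∃ K : Set X, IsCompact K ∧ ∀ x : X, ∃ g : G, g • x ∈ K := by
  have hq := MulAction.isOpenQuotientMap_quotientMk (Γ := G) (T := X)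
  obtain ⟨K, hK, hsurj⟩ := hq.isOpenMap.exists_isCompact_surjOn hq.surjective
  refine ⟨K, hK, fun x => ?_⟩
  obtain ⟨y, hy, hxy⟩ := hsurj (mem_univ (Quotient.mk _ x))
  obtain ⟨g, rfl⟩ := Quotient.exact hxy
  exact ⟨g, hy⟩

theorem ContinuousOn.time_slice {X : Type*} [TopologicalSpace X] {F : ℝ → X → ℝ} {I : Set ℝ}
    (hF : ContinuousOn (fun p : ℝ × X => F p.1 p.2) (I ×ˢ univ)) (x : X) :
    ContinuousOn (fun t => F t x) I :=
  hF.comp (continuousOn_id.prodMk continuousOn_const) fun _ ht => ⟨ht, trivial⟩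

theorem exists_first_zero {X G : Type*} [TopologicalSpace X] [T2Space X] [SMul G X]
    {K : Set X} (hK : IsCompact K) (hKrep : ∀ x, ∃ g : G, g • x ∈ K)
    {f : ℝ → X → ℝ} {S : ℝ} (hf : ContinuousOn (fun p : ℝ × X => f p.1 p.2) (Icc 0 S ×ˢ univ))
    (hper : ∀ s ∈ Icc 0 S, ∀ (g : G) x, f s (g • x) = f s x)
    (h0 : ∀ x, f 0 x < 0) (hS : 0 ≤ S) (hfS : ∃ x, 0 ≤ f S x) :
    ∃ s₀ ∈ Ioc 0 S, ∃ x₀, f s₀ x₀ = 0 ∧ (∀ x, f s₀ x ≤ 0) ∧ ∀ s ∈ Ico 0 s₀, ∀ x, f s x < 0 := by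
  set D := Icc 0 S ×ˢ K ∩ (fun p : ℝ × X => f p.1 p.2) ⁻¹' Ici 0
  have hD : IsCompact D := (isCompact_Icc.prod hK).of_isClosed_subset
    ((hf.mono (prod_mono_right (subset_univ K))).preimage_isClosed_of_isClosed
      (isClosed_Icc.prod hK.isClosed) isClosed_Ici) inter_subset_left
  have exists_mem_D : ∀ s ∈ Icc 0 S, ∀ x, 0 ≤ f s x → ∃ y, (s, y) ∈ D := fun s hs x hx => by
    obtain ⟨g, hg⟩ := hKrep x
    exact ⟨g • x, ⟨hs, hg⟩, show 0 ≤ f s (g • x) by rwa [hper s hs]⟩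
  obtain ⟨x, hx⟩ := hfS
  obtain ⟨y, hy⟩ := exists_mem_D S ⟨hS, le_rfl⟩ x hx
  obtain ⟨⟨s₀, x₀⟩, ⟨⟨hs₀, -⟩, hx₀⟩, hmin⟩ :=
    hD.exists_isMinOn ⟨_, hy⟩ continuous_fst.continuousOn
  have hbefore : ∀ s ∈ Ico 0 s₀, ∀ x, f s x < 0 := fun s hs x => by
    by_contra! h
    obtain ⟨y, hy⟩ := exists_mem_D s ⟨hs.1, hs.2.le.trans hs₀.2⟩ x h
    exact (hmin hy).not_gt hs.2
  have hs₀pos : 0 < s₀ := hs₀.1.lt_of_ne fun h => (h0 x₀).not_ge (h ▸ hx₀)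
  have hle : ∀ x, f s₀ x ≤ 0 := fun x => by
    have hcont := (hf.time_slice x).mono (Icc_subset_Icc_right hs₀.2)
    rw [← closure_Ico hs₀pos.ne] at hcont
    exact le_on_closure (fun s hs => (hbefore s hs x).le) hcont continuousOn_const
      (closure_Ico hs₀pos.ne ▸ right_mem_Icc.2 hs₀pos.le)
  exact ⟨s₀, ⟨hs₀pos, hs₀.2⟩, x₀, (hle x₀).antisymm hx₀, hle, hbefore⟩

theorem HasDerivAt.nonneg_of_forall_le {g : ℝ → ℝ} {g' a b : ℝ} (hg : HasDerivAt g g' b)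
    (hab : a < b) (hle : ∀ s ∈ Ioo a b, g s ≤ g b) : 0 ≤ g' := by
  refine ge_of_tendsto (hasDerivAt_iff_tendsto_slope_left_right.1 hg).1 ?_
  filter_upwards [Ioo_mem_nhdsLT hab] with s hs
  rw [slope_def_field]
  exact div_nonneg_of_nonpos (sub_nonpos.2 (hle s hs)) (sub_nonpos.2 hs.2.le)

theorem IsLocalMax.hasDerivAt_deriv_nonpos {q q' : ℝ → ℝ} {a L : ℝ} (hmax : IsLocalMax q a)
    (hq : ∀ᶠ t in 𝓝 a, HasDerivAt q (q' t) t) (hq' : HasDerivAt q' L a) : L ≤ 0 := by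
  by_contra! hL
  have hq'a : q' a = 0 := hmax.hasDerivAt_eq_zero hq.self_of_nhds
  -- `q'` vanishes at `a` with positive slope, so `q` increases just to the right of `a`.
  have hpos : ∀ᶠ t in 𝓝[>] a, 0 < q' t := by
    filter_upwards [(hasDerivAt_iff_tendsto_slope_left_right.1 hq').2.eventually_const_lt hL,
      self_mem_nhdsWithin] with t ht hta
    rw [slope_def_field, hq'a, sub_zero] at ht
    exact (div_pos_iff_of_pos_right (sub_pos.2 hta)).1 ht
  obtain ⟨b, hab, hb⟩ := mem_nhdsGT_iff_exists_Ioo_subset.1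
    (hpos.and (nhdsWithin_le_nhds (hq.and hmax)))
  obtain ⟨t, hat, htb⟩ := exists_between (show a < b from hab)
  have hderiv : ∀ r ∈ Icc a t, HasDerivAt q (q' r) r := fun r hr =>
    hr.1.eq_or_lt.elim (fun h => h ▸ hq.self_of_nhds)
      fun h => (hb ⟨h, hr.2.trans_lt htb⟩).2.1
  obtain ⟨c, hc, hslope⟩ := exists_hasDerivAt_eq_slope q q' hat
    (fun r hr => (hderiv r hr).continuousAt.continuousWithinAt)
    fun r hr => hderiv r (Ioo_subset_Icc_self hr)
  have hqc : 0 < (q t - q a) / (t - a) := hslope ▸ (hb ⟨hc.1, hc.2.trans htb⟩).1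
  exact (hb ⟨hat, htb⟩).2.2.not_gt
    (sub_pos.1 ((div_pos_iff_of_pos_right (sub_pos.2 hat)).1 hqc))

section Calculus

variable {E : Type*} [NormedAddCommGroup E] [NormedSpace ℝ E] {f : E → ℝ} {x : E}

theorem ContDiffAt.differentiableAt_fderiv_apply (hf : ContDiffAt ℝ 2 f x) (v : E) :
    DifferentiableAt ℝ (fun y => fderiv ℝ f y v) x :=
  ((hf.fderiv_right (m := 1) (by norm_num)).clm_apply contDiffAt_const).differentiableAt
    one_ne_zero

theorem ContDiffAt.eventually_differentiableAt (hf : ContDiffAt ℝ 2 f x) :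
    ∀ᶠ y in 𝓝 x, DifferentiableAt ℝ f y :=
  (hf.eventually (by simp)).mono fun _ hy => hy.differentiableAt two_ne_zero

theorem hasFDerivAt_neg_inv {y : E} (hf : DifferentiableAt ℝ f y)
    (hy : f y ≠ 0) : HasFDerivAt (fun z => -(f z)⁻¹) ((f y ^ 2)⁻¹ • fderiv ℝ f y) y := by
  have := ((hasDerivAt_inv hy).comp_hasFDerivAt y hf.hasFDerivAt).neg
  rwa [neg_smul, neg_neg] at this

theorem IsLocalMax.fderiv_fderiv_apply_nonpos (hmax : IsLocalMax f x) (hf : ContDiffAt ℝ 2 f x)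
    (v : E) : fderiv ℝ (fun y => fderiv ℝ f y v) x v ≤ 0 := by
  let line : ℝ → E := fun t => x + t • v
  have hline : ∀ t, HasDerivAt line v t := fun t => by
    simpa only [id, one_smul] using ((hasDerivAt_id t).smul_const v).const_add x
  have hline0 : line 0 = x := by simp [line]
  refine IsLocalMax.hasDerivAt_deriv_nonpos (q := f ∘ line) (q' := fun t => fderiv ℝ f (line t) v)
    ((hline0 ▸ hmax : IsLocalMax f (line 0)).comp_continuous (hline 0).continuousAt) ?_ ?_
  · have := (hline 0).continuousAt.eventually (hline0 ▸ hf.eventually_differentiableAt)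
    filter_upwards [this] with t ht
    exact ht.hasFDerivAt.comp_hasDerivAt t (hline t)
  · have := (hline0 ▸ hf.differentiableAt_fderiv_apply v).hasFDerivAt.comp_hasDerivAt 0 (hline 0)
    rwa [hline0] at this

end Calculus

section Laplacian

variable {n : ℕ} {f g : EuclideanSpace ℝ (Fin n) → ℝ} {x : EuclideanSpace ℝ (Fin n)}

theorem lap_nonpos_of_isLocalMax (hmax : IsLocalMax f x) (hf : ContDiffAt ℝ 2 f x) :
    lap f x ≤ 0 :=
  Finset.sum_nonpos fun _ _ => hmax.fderiv_fderiv_apply_nonpos hf _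

theorem lap_sub (hf : ContDiffAt ℝ 2 f x) (hg : ContDiffAt ℝ 2 g x) :
    lap (fun y => f y - g y) x = lap f x - lap g x := by
  rw [lap, lap, lap, ← Finset.sum_sub_distrib]
  refine Finset.sum_congr rfl fun i _ => ?_
  set e := EuclideanSpace.single i (1 : ℝ)
  have hfg : (fun y => fderiv ℝ (fun z => f z - g z) y e)
      =ᶠ[𝓝 x] fun y => fderiv ℝ f y e - fderiv ℝ g y e := by
    filter_upwards [hf.eventually_differentiableAt, hg.eventually_differentiableAt] with y hfy hgy
    rw [fderiv_fun_sub hfy hgy]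
    rfl
  rw [hfg.fderiv_eq,
    fderiv_fun_sub (hf.differentiableAt_fderiv_apply e) (hg.differentiableAt_fderiv_apply e)]
  rfl

theorem lap_const_mul (c : ℝ) (hf : ContDiffAt ℝ 2 f x) :
    lap (fun y => c * f y) x = c * lap f x := by
  rw [lap, lap, Finset.mul_sum]
  refine Finset.sum_congr rfl fun i _ => ?_
  set e := EuclideanSpace.single i (1 : ℝ)
  have hcf : (fun y => fderiv ℝ (fun z => c * f z) y e) =ᶠ[𝓝 x] fun y => c * fderiv ℝ f y e := by
    filter_upwards [hf.eventually_differentiableAt] with y hfy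
    rw [fderiv_const_mul hfy]
    rfl
  rw [hcf.fderiv_eq, fderiv_const_mul (hf.differentiableAt_fderiv_apply e)]
  rfl

theorem lap_le_lap_of_le_of_eq (hf : ContDiffAt ℝ 2 f x) (hg : ContDiffAt ℝ 2 g x)
    (hle : ∀ y, f y ≤ g y) (heq : f x = g x) : lap f x ≤ lap g x := by
  have hmax : IsLocalMax (fun y => f y - g y) x :=
    Eventually.of_forall fun y => by simp only [heq, sub_self, sub_nonpos, hle y]
  linarith [lap_nonpos_of_isLocalMax hmax (hf.sub hg), lap_sub hf hg]

theorem sq_norm_gradient (f : EuclideanSpace ℝ (Fin n) → ℝ) (x : EuclideanSpace ℝ (Fin n)) :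
    ‖gradient f x‖ ^ 2 = ∑ i : Fin n, (fderiv ℝ f x (EuclideanSpace.single i 1)) ^ 2 := by
  rw [EuclideanSpace.norm_sq_eq]
  refine Finset.sum_congr rfl fun i _ => ?_
  rw [← inner_gradient_left, EuclideanSpace.inner_single_right]
  simp

variable {v : EuclideanSpace ℝ (Fin n) → ℝ}

theorem lap_neg_inv (hv : ContDiffAt ℝ 2 v x) (hx : v x ≠ 0) :
    lap (fun y => -(v y)⁻¹) x = lap v x / v x ^ 2 - 2 * ‖gradient v x‖ ^ 2 / v x ^ 3 := by
  have hsummand : ∀ e, fderiv ℝ (fun y => fderiv ℝ (fun z => -(v z)⁻¹) y e) x e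
      = (v x ^ 2)⁻¹ * fderiv ℝ (fun y => fderiv ℝ v y e) x e
        - 2 / v x ^ 3 * fderiv ℝ v x e ^ 2 := by
    intro e
    have hfd : (fun y => fderiv ℝ (fun z => -(v z)⁻¹) y e)
        =ᶠ[𝓝 x] fun y => (v y ^ 2)⁻¹ * fderiv ℝ v y e := by
      filter_upwards [hv.eventually_differentiableAt, hv.continuousAt.eventually_ne hx]
        with y hdy hy
      rw [(hasFDerivAt_neg_inv hdy hy).fderiv]
      rfl
    have hA : HasFDerivAt (fun y => (v y ^ 2)⁻¹)
        ((-(↑2 * v x ^ 1) / (v x ^ 2) ^ 2) • fderiv ℝ v x) x :=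
      ((hasDerivAt_pow 2 (v x)).inv (pow_ne_zero 2 hx)).comp_hasFDerivAt x
        (hv.differentiableAt two_ne_zero).hasFDerivAt
    rw [hfd.fderiv_eq, fderiv_fun_mul hA.differentiableAt (hv.differentiableAt_fderiv_apply e),
      hA.fderiv]
    simp only [add_apply, smul_apply, smul_eq_mul]
    field_simp
    ring
  rw [lap, lap, sq_norm_gradient, Finset.sum_congr rfl fun i _ => hsummand _,
    Finset.sum_sub_distrib, ← Finset.mul_sum, ← Finset.mul_sum]
  field_simp

end Laplacian

section Slices

variable {E : Type*} [NormedAddCommGroup E] [NormedSpace ℝ E] {F : ℝ → E → ℝ}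
  {U : Set (ℝ × E)} {k : WithTop ℕ∞} {s : ℝ} {x : E}

theorem ContDiffOn.contDiffAt_slice (hF : ContDiffOn ℝ k (fun p : ℝ × E => F p.1 p.2) U)
    (hU : U ∈ 𝓝 (s, x)) : ContDiffAt ℝ k (F s) x :=
  (hF.contDiffAt hU).comp x (contDiffAt_const.prodMk contDiffAt_id)

theorem ContDiffOn.contDiffAt_time_slice (hF : ContDiffOn ℝ k (fun p : ℝ × E => F p.1 p.2) U)
    (hU : U ∈ 𝓝 (s, x)) : ContDiffAt ℝ k (fun t => F t x) s :=
  (hF.contDiffAt hU).comp s (contDiffAt_id.prodMk contDiffAt_const)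

end Slices

section Comparison

variable {n : ℕ}

structure IsPeriodicSolution (G : Type*) [SMul G (EuclideanSpace ℝ (Fin n))]
    (v : ℝ → EuclideanSpace ℝ (Fin n) → ℝ) : Prop where
  continuousOn : ContinuousOn (fun p : ℝ × EuclideanSpace ℝ (Fin n) => v p.1 p.2) (Ici 0 ×ˢ univ)
  contDiffOn : ContDiffOn ℝ (⊤ : ℕ∞) (fun p : ℝ × EuclideanSpace ℝ (Fin n) => v p.1 p.2)
    (Ioi 0 ×ˢ univ)
  pos : ∀ s, 0 ≤ s → ∀ x, 0 < v s x
  periodic : ∀ s, 0 ≤ s → ∀ g : G, ∀ x, v s (g • x) = v s x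
  pde : ∀ s, 0 < s → ∀ x, deriv (fun t => v t x) s =
    lap (v s) x / (v s x) ^ 2 - 2 * ‖gradient (v s) x‖ ^ 2 / (v s x) ^ 3

structure IsStrictSupersolution (G : Type*) [SMul G (EuclideanSpace ℝ (Fin n))]
    (w : ℝ → EuclideanSpace ℝ (Fin n) → ℝ) : Prop where
  continuousOn : ContinuousOn (fun p : ℝ × EuclideanSpace ℝ (Fin n) => w p.1 p.2) (Ici 0 ×ˢ univ)
  contDiffAt : ∀ s, 0 < s → ∀ x, ContDiffAt ℝ 2 (w s) x
  pos : ∀ s, 0 ≤ s → ∀ x, 0 < w s x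
  periodic : ∀ s, 0 ≤ s → ∀ g : G, ∀ x, w s (g • x) = w s x
  lap_lt_deriv : ∀ s, 0 < s → ∀ x, ∃ w', HasDerivAt (fun t => w t x) w' s ∧
    lap (fun y => -(w s y)⁻¹) x < w'

/-- The reparametrisation `θ` of time with `θ 0 = 0` and `θ' = (1 + ε (1 + s))⁻²`. -/
def timeChange (ε s : ℝ) : ℝ := s / ((1 + ε) * (1 + ε * (1 + s)))

def rescale (ε : ℝ) (v : ℝ → EuclideanSpace ℝ (Fin n) → ℝ) (s : ℝ)
    (x : EuclideanSpace ℝ (Fin n)) : ℝ :=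
  (1 + ε * (1 + s)) * v (timeChange ε s) x

section Rescale

variable {ε s : ℝ}

theorem timeChange_nonneg (hε : 0 ≤ ε) (hs : 0 ≤ s) : 0 ≤ timeChange ε s := by
  unfold timeChange; positivity

theorem timeChange_pos (hε : 0 ≤ ε) (hs : 0 < s) : 0 < timeChange ε s := by
  unfold timeChange; positivity

theorem continuousOn_timeChange :
    ContinuousOn (fun p : ℝ × ℝ => timeChange p.1 p.2) (Ici 0 ×ˢ Ici 0) := by
  refine continuousOn_snd.div (by fun_prop) fun p hp => ?_
  have : 0 ≤ p.1 := hp.1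
  have : 0 ≤ p.2 := hp.2
  positivity

theorem hasDerivAt_timeChange (hε : 0 ≤ ε) (hs : 0 ≤ s) :
    HasDerivAt (timeChange ε) ((1 + ε * (1 + s)) ^ 2)⁻¹ s := by
  have hden : HasDerivAt (fun t => (1 + ε) * (1 + ε * (1 + t))) ((1 + ε) * ε) s := by
    simpa using (((hasDerivAt_id s).const_add 1).const_mul ε |>.const_add 1).const_mul (1 + ε)
  have : 0 < 1 + ε * (1 + s) := by positivity
  refine ((hasDerivAt_id' s).fun_div hden (by positivity)).congr_deriv ?_
  field_simp
  ring

end Rescale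

theorem tendsto_rescale {v : ℝ → EuclideanSpace ℝ (Fin n) → ℝ}
    (hv : ContinuousOn (fun p : ℝ × EuclideanSpace ℝ (Fin n) => v p.1 p.2) (Ici 0 ×ˢ univ))
    {s : ℝ} (hs : 0 ≤ s) (x : EuclideanSpace ℝ (Fin n)) :
    Tendsto (fun ε => rescale ε v s x) (𝓝[≥] 0) (𝓝 (v s x)) := by
  have hθ : ContinuousWithinAt (fun ε => timeChange ε s) (Ici 0) 0 :=
    continuousOn_timeChange.comp (continuousOn_id.prodMk continuousOn_const)
      (fun _ hε => ⟨hε, hs⟩) 0 self_mem_Ici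
  have hvθ : ContinuousWithinAt (fun ε => v (timeChange ε s) x) (Ici 0) 0 :=
    (hv.time_slice x (timeChange 0 s) (by simpa [timeChange] using hs)).comp
      (f := fun ε => timeChange ε s) hθ fun _ hε => timeChange_nonneg hε hs
  have hfactor : ContinuousWithinAt (fun ε : ℝ => 1 + ε * (1 + s)) (Ici 0) 0 :=
    (by fun_prop : Continuous fun ε : ℝ => 1 + ε * (1 + s)).continuousWithinAt
  have := (hfactor.fun_mul hvθ).tendsto
  rwa [show timeChange 0 s = s by simp [timeChange], zero_mul, add_zero, one_mul] at this

namespace IsPeriodicSolution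

variable {G : Type*} [SMul G (EuclideanSpace ℝ (Fin n))] {v : ℝ → EuclideanSpace ℝ (Fin n) → ℝ}
  {ε s : ℝ}

theorem contDiffAt (hv : IsPeriodicSolution G v) (hs : 0 < s) (x : EuclideanSpace ℝ (Fin n)) :
    ContDiffAt ℝ 2 (v s) x :=
  (hv.contDiffOn.contDiffAt_slice (x := x) (prod_mem_nhds (Ioi_mem_nhds hs) univ_mem)).of_le
    (by norm_cast)

theorem hasDerivAt (hv : IsPeriodicSolution G v) (hs : 0 < s) (x : EuclideanSpace ℝ (Fin n)) :
    HasDerivAt (fun t => v t x) (lap (fun y => -(v s y)⁻¹) x) s := by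
  have hdiff := (hv.contDiffOn.contDiffAt_time_slice (x := x)
    (prod_mem_nhds (Ioi_mem_nhds hs) univ_mem)).differentiableAt (by simp)
  rw [lap_neg_inv (hv.contDiffAt hs x) (hv.pos s hs.le x).ne', ← hv.pde s hs x]
  exact hdiff.hasDerivAt

theorem lt_of_isStrictSupersolution {K : Set (EuclideanSpace ℝ (Fin n))} (hK : IsCompact K)
    (hKrep : ∀ x, ∃ g : G, g • x ∈ K) {u w : ℝ → EuclideanSpace ℝ (Fin n) → ℝ}
    (hu : IsPeriodicSolution G u) (hw : IsStrictSupersolution G w) (h0 : ∀ x, u 0 x < w 0 x)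
    {S : ℝ} (hS : 0 ≤ S) (x : EuclideanSpace ℝ (Fin n)) : u S x < w S x := by
  by_contra! hx
  have hcont : ContinuousOn (fun p : ℝ × EuclideanSpace ℝ (Fin n) => u p.1 p.2 - w p.1 p.2)
      (Icc 0 S ×ˢ univ) :=
    (hu.continuousOn.sub hw.continuousOn).mono (prod_mono_left Icc_subset_Ici_self)
  obtain ⟨s₀, hs₀, x₀, heq, hle, hbefore⟩ :=
    exists_first_zero (f := fun s y => u s y - w s y) hK hKrep hcont
    (fun s hs g y => by rw [hu.periodic s hs.1, hw.periodic s hs.1])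
    (fun y => sub_neg.2 (h0 y)) hS ⟨x, sub_nonneg.2 hx⟩
  obtain ⟨w', hw', hlt⟩ := hw.lap_lt_deriv s₀ hs₀.1 x₀
  -- `u - w` attains its first zero at `(s₀, x₀)`, so it is nondecreasing in time there ...
  have htime : 0 ≤ lap (fun y => -(u s₀ y)⁻¹) x₀ - w' :=
    ((hu.hasDerivAt hs₀.1 x₀).sub hw').nonneg_of_forall_le hs₀.1
      fun s hs => (hbefore s ⟨hs.1.le, hs.2⟩ x₀).le.trans heq.ge
  -- ... while `-1/u ≤ -1/w` touch at `x₀`, which orders their Laplacians there.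
  have hspace : lap (fun y => -(u s₀ y)⁻¹) x₀ ≤ lap (fun y => -(w s₀ y)⁻¹) x₀ := by
    have hupos := hu.pos s₀ hs₀.1.le
    have hwpos := hw.pos s₀ hs₀.1.le
    refine lap_le_lap_of_le_of_eq ((hu.contDiffAt hs₀.1 x₀).inv (hupos x₀).ne').neg
      ((hw.contDiffAt s₀ hs₀.1 x₀).inv (hwpos x₀).ne').neg (fun y => ?_) ?_
    · exact neg_le_neg (inv_anti₀ (hupos y) (sub_nonpos.1 (hle y)))
    · rw [sub_eq_zero.1 heq]
  linarith

theorem continuousOn_rescale (hv : IsPeriodicSolution G v) (hε : 0 ≤ ε) :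
    ContinuousOn (fun p : ℝ × EuclideanSpace ℝ (Fin n) => rescale ε v p.1 p.2)
      (Ici 0 ×ˢ univ) := by
  have htime : ContinuousOn (fun p : ℝ × EuclideanSpace ℝ (Fin n) => timeChange ε p.1)
      (Ici 0 ×ˢ univ) :=
    continuousOn_timeChange.comp (continuous_const.prodMk continuous_fst).continuousOn
      fun p hp => ⟨hε, hp.1⟩
  exact (by fun_prop : Continuous fun p : ℝ × EuclideanSpace ℝ (Fin n) => 1 + ε * (1 + p.1))
    |>.continuousOn.mul (hv.continuousOn.comp (htime.prodMk continuousOn_snd)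
      fun p hp => ⟨timeChange_nonneg hε hp.1, trivial⟩)

theorem lap_neg_inv_rescale (hv : IsPeriodicSolution G v) (hε : 0 ≤ ε) (hs : 0 < s)
    (x : EuclideanSpace ℝ (Fin n)) :
    lap (fun y => -(rescale ε v s y)⁻¹) x
      = (1 + ε * (1 + s))⁻¹ * lap (fun y => -(v (timeChange ε s) y)⁻¹) x := by
  have hθ : ContDiffAt ℝ 2 (fun y => -(v (timeChange ε s) y)⁻¹) x :=
    ((hv.contDiffAt (timeChange_pos hε hs) x).inv
      (hv.pos _ (timeChange_nonneg hε hs.le) x).ne').neg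
  rw [← lap_const_mul _ hθ]
  simp only [rescale, mul_inv, mul_neg]

theorem isStrictSupersolution_rescale (hv : IsPeriodicSolution G v) (hε : 0 < ε) :
    IsStrictSupersolution G (rescale ε v) where
  continuousOn := hv.continuousOn_rescale hε.le
  contDiffAt s hs x := contDiffAt_const.mul (hv.contDiffAt (timeChange_pos hε.le hs) x)
  pos s hs x := mul_pos (by positivity) (hv.pos _ (timeChange_nonneg hε.le hs) x)
  periodic s hs g x := by rw [rescale, rescale, hv.periodic _ (timeChange_nonneg hε.le hs)]
  lap_lt_deriv s hs x := by
    have hθ := timeChange_pos hε.le hs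
    have hfactor : HasDerivAt (fun t => 1 + ε * (1 + t)) ε s := by
      simpa using ((hasDerivAt_id s).const_add 1).const_mul ε |>.const_add 1
    refine ⟨_, hfactor.mul ((hv.hasDerivAt hθ x).comp s (hasDerivAt_timeChange hε.le hs.le)), ?_⟩
    rw [hv.lap_neg_inv_rescale hε.le hs]
    have hgap : 0 < ε * v (timeChange ε s) x := mul_pos hε (hv.pos _ hθ.le x)
    generalize lap (fun y => -(v (timeChange ε s) y)⁻¹) x = L
    have hc : 1 + ε * (1 + s) ≠ 0 := by positivity
    have : (1 + ε * (1 + s)) * (L * ((1 + ε * (1 + s)) ^ 2)⁻¹) = (1 + ε * (1 + s))⁻¹ * L := by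
      field_simp
    linarith

theorem le_of_initial_eq {K : Set (EuclideanSpace ℝ (Fin n))} (hK : IsCompact K)
    (hKrep : ∀ x, ∃ g : G, g • x ∈ K) {u : ℝ → EuclideanSpace ℝ (Fin n) → ℝ}
    (hu : IsPeriodicSolution G u) (hv : IsPeriodicSolution G v) (h0 : ∀ x, u 0 x = v 0 x)
    (hs : 0 ≤ s) (x : EuclideanSpace ℝ (Fin n)) : u s x ≤ v s x := by
  refine ge_of_tendsto ((tendsto_rescale hv.continuousOn hs x).mono_left
    (nhdsWithin_mono _ Ioi_subset_Ici_self)) ?_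
  filter_upwards [self_mem_nhdsWithin] with ε (hε : 0 < ε)
  refine (hu.lt_of_isStrictSupersolution hK hKrep (hv.isStrictSupersolution_rescale hε)
    (fun y => ?_) hs x).le
  simp only [rescale, timeChange, zero_div, add_zero, mul_one, h0 y]
  linarith [hv.pos 0 le_rfl y, mul_pos hε (hv.pos 0 le_rfl y)]

end IsPeriodicSolution

end Comparison

theorem uniqueness_rescaled_general (n : ℕ)
    (Γ : Subgroup (EuclideanSpace ℝ (Fin n) ≃ᵢ EuclideanSpace ℝ (Fin n)))
    (hΓ : CompactSpace (Quotient (MulAction.orbitRel Γ (EuclideanSpace ℝ (Fin n)))))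
    (v₀ : EuclideanSpace ℝ (Fin n) → ℝ)
    (v₁ v₂ : ℝ → EuclideanSpace ℝ (Fin n) → ℝ)
    (hcont : ∀ v ∈ ({v₁, v₂} : Set (ℝ → EuclideanSpace ℝ (Fin n) → ℝ)),
      ContinuousOn (fun p : ℝ × EuclideanSpace ℝ (Fin n) => v p.1 p.2)
        (Set.Ici 0 ×ˢ Set.univ))
    (hsmooth : ∀ v ∈ ({v₁, v₂} : Set (ℝ → EuclideanSpace ℝ (Fin n) → ℝ)),
      ContDiffOn ℝ (⊤ : ℕ∞) (fun p : ℝ × EuclideanSpace ℝ (Fin n) => v p.1 p.2)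
        (Set.Ioi 0 ×ˢ Set.univ))
    (hpos : ∀ v ∈ ({v₁, v₂} : Set (ℝ → EuclideanSpace ℝ (Fin n) → ℝ)),
      ∀ s, 0 ≤ s → ∀ x, 0 < v s x)
    (hper : ∀ v ∈ ({v₁, v₂} : Set (ℝ → EuclideanSpace ℝ (Fin n) → ℝ)),
      ∀ s, 0 ≤ s → ∀ g : Γ, ∀ x, v s (g • x) = v s x)
    (hpde : ∀ v ∈ ({v₁, v₂} : Set (ℝ → EuclideanSpace ℝ (Fin n) → ℝ)),
      ∀ s, 0 < s → ∀ x,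
        deriv (fun t => v t x) s =
          lap (v s) x / (v s x) ^ 2 - 2 * ‖gradient (v s) x‖ ^ 2 / (v s x) ^ 3)
    (hinit₁ : ∀ x, v₁ 0 x = v₀ x) (hinit₂ : ∀ x, v₂ 0 x = v₀ x) :
    ∀ s, 0 ≤ s → ∀ x, v₁ s x = v₂ s x := by
  obtain ⟨K, hK, hKrep⟩ := exists_isCompact_forall_exists_smul_mem (G := Γ)
    (X := EuclideanSpace ℝ (Fin n))
  have hsol : ∀ v ∈ ({v₁, v₂} : Set (ℝ → EuclideanSpace ℝ (Fin n) → ℝ)),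
      IsPeriodicSolution Γ v := fun v hv =>
    ⟨hcont v hv, hsmooth v hv, hpos v hv, hper v hv, hpde v hv⟩
  have h₁ := hsol v₁ (mem_insert _ _)
  have h₂ := hsol v₂ (mem_insert_of_mem _ rfl)
  have h0 : ∀ x, v₁ 0 x = v₂ 0 x := fun x => (hinit₁ x).trans (hinit₂ x).symm
  intro s hs x
  exact (h₁.le_of_initial_eq hK hKrep h₂ h0 hs x).antisymm
    (h₂.le_of_initial_eq hK hKrep h₁ (fun x => (h0 x).symm) hs x)

/-- Uniqueness part of Theorem 3.1, in the rescaled variables used in its proof. -/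
theorem uniqueness_rescaled (n : ℕ) (hn : 1 ≤ n)
    (Γ : Subgroup (EuclideanSpace ℝ (Fin n) ≃ᵢ EuclideanSpace ℝ (Fin n)))
    (hΓ : CompactSpace (Quotient (MulAction.orbitRel Γ (EuclideanSpace ℝ (Fin n)))))
    (v₀ : EuclideanSpace ℝ (Fin n) → ℝ)
    (hv₀per : ∀ g : Γ, ∀ x, v₀ (g • x) = v₀ x)
    (hv₀pos : ∀ x, 0 < v₀ x)
    (hv₀cont : Continuous v₀)
    (v₁ v₂ : ℝ → EuclideanSpace ℝ (Fin n) → ℝ)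
    (hcont : ∀ v ∈ ({v₁, v₂} : Set (ℝ → EuclideanSpace ℝ (Fin n) → ℝ)),
      ContinuousOn (fun p : ℝ × EuclideanSpace ℝ (Fin n) => v p.1 p.2)
        (Set.Ici 0 ×ˢ Set.univ))
    (hsmooth : ∀ v ∈ ({v₁, v₂} : Set (ℝ → EuclideanSpace ℝ (Fin n) → ℝ)),
      ContDiffOn ℝ (⊤ : ℕ∞) (fun p : ℝ × EuclideanSpace ℝ (Fin n) => v p.1 p.2)
        (Set.Ioi 0 ×ˢ Set.univ))
    (hpos : ∀ v ∈ ({v₁, v₂} : Set (ℝ → EuclideanSpace ℝ (Fin n) → ℝ)),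
      ∀ s, 0 ≤ s → ∀ x, 0 < v s x)
    (hper : ∀ v ∈ ({v₁, v₂} : Set (ℝ → EuclideanSpace ℝ (Fin n) → ℝ)),
      ∀ s, 0 ≤ s → ∀ g : Γ, ∀ x, v s (g • x) = v s x)
    (hpde : ∀ v ∈ ({v₁, v₂} : Set (ℝ → EuclideanSpace ℝ (Fin n) → ℝ)),
      ∀ s, 0 < s → ∀ x,
        deriv (fun t => v t x) s =
          lap (v s) x / (v s x) ^ 2 - 2 * ‖gradient (v s) x‖ ^ 2 / (v s x) ^ 3)
    (hinit₁ : ∀ x, v₁ 0 x = v₀ x) (hinit₂ : ∀ x, v₂ 0 x = v₀ x) :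
    ∀ s, 0 ≤ s → ∀ x, v₁ s x = v₂ s x :=
  uniqueness_rescaled_general n Γ hΓ v₀ v₁ v₂ hcont hsmooth hpos hper hpde hinit₁ hinit₂
end
end

section
/- Change of time variable (reduction of the continuity equation (15) of the paper to the parabolic equation (21)): Let m ≥ 3 be an integer, n = m − 1, I ⊆ (0,∞) an interval, γ : I → ℝ continuous, and ζ, σ : I → ℝ differentiable functions satisfying ζ'(a) = −(m−1) γ(a)/a and σ'(a) = −((m−2)/2) e^{−ζ(a)}/a³ for all a ∈ I. Let J ⊆ ℝ contain σ(I) and let v : J × ℝⁿ → ℝ be everywhere positive, differentiable in s, twice differentiable in x, solving ∂v/∂s = v⁻² Δv − 2 v⁻³ |∇v|² on J × ℝⁿ. Then ρ(a,x) := e^{ζ(a)} v(σ(a),x)² satisfies a ∂ρ/∂a = −(m−1) γ(a) ρ + ((m−2)/(2a²)) ( (3/2) |∇ρ|²/ρ² − Δρ/ρ ) at every point of I × ℝⁿ. -/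
/-! With `ρ = e^ζ v(σ, ·)²` one has `∇ρ = 2 e^ζ v ∇v` and `Δρ = 2 e^ζ (|∇v|² + v Δv)`, so
`(3/2) |∇ρ|²/ρ² − Δρ/ρ = 4 |∇v|²/v² − 2 Δv/v = −2 v ∂ₛv` by the equation for `v`.
On the other side, `a ∂ₐρ = a ζ' ρ + 2 a σ' e^ζ v ∂ₛv = −(m−1) γ ρ − ((m−2)/a²) v ∂ₛv`,
since the factor `e^{−ζ}` in `σ'` cancels `e^ζ`. -/

open scoped RealInnerProductSpace

noncomputable section

theorem hasFDerivAt_const_mul_sq {E : Type*} [NormedAddCommGroup E] [NormedSpace ℝ E]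
    {f : E → ℝ} {x : E} (c : ℝ) (hf : DifferentiableAt ℝ f x) :
    HasFDerivAt (fun y => c * f y ^ 2) ((2 * c * f x) • fderiv ℝ f x) x := by
  have h := (hf.hasFDerivAt.mul hf.hasFDerivAt).const_mul c
  simp only [← sq] at h
  refine h.congr_fderiv ?_
  ext w
  simp only [smul_apply, add_apply, smul_eq_mul]
  ring

section Gradient

variable {E : Type*} [NormedAddCommGroup E] [InnerProductSpace ℝ E] [CompleteSpace E]
  {f : E → ℝ} {x : E}

theorem gradient_const_mul_sq (c : ℝ) (hf : DifferentiableAt ℝ f x) :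
    gradient (fun y => c * f y ^ 2) x = (2 * c * f x) • gradient f x := by
  rw [gradient, (hasFDerivAt_const_mul_sq c hf).fderiv, map_smul, gradient]

theorem norm_gradient_const_mul_sq (c : ℝ) (hf : DifferentiableAt ℝ f x) :
    ‖gradient (fun y => c * f y ^ 2) x‖ ^ 2 = (2 * c * f x) ^ 2 * ‖gradient f x‖ ^ 2 := by
  rw [gradient_const_mul_sq c hf, norm_smul, mul_pow, Real.norm_eq_abs, sq_abs]

end Gradient

theorem norm_gradient_sq_eq_sum {ι : Type*} [Fintype ι] [DecidableEq ι]
    (f : EuclideanSpace ℝ ι → ℝ) (x : EuclideanSpace ℝ ι) :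
    ‖gradient f x‖ ^ 2 = ∑ i, fderiv ℝ f x (EuclideanSpace.single i 1) ^ 2 := by
  simp only [← inner_gradient_left, EuclideanSpace.inner_single_right, one_mul, conj_trivial,
    EuclideanSpace.norm_sq_eq, Real.norm_eq_abs, sq_abs]

theorem lap_const_mul_sq {n : ℕ} {f : EuclideanSpace ℝ (Fin n) → ℝ}
    {x : EuclideanSpace ℝ (Fin n)} (c : ℝ) (hf : Differentiable ℝ f)
    (hf' : DifferentiableAt ℝ (fderiv ℝ f) x) :
    lap (fun y => c * f y ^ 2) x = 2 * c * (‖gradient f x‖ ^ 2 + f x * lap f x) := by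
  have hfderiv : ∀ y, fderiv ℝ (fun z => c * f z ^ 2) y = (2 * c * f y) • fderiv ℝ f y :=
    fun y => (hasFDerivAt_const_mul_sq c (hf y)).fderiv
  have hpartial : ∀ w : EuclideanSpace ℝ (Fin n),
      fderiv ℝ (fun y => fderiv ℝ (fun z => c * f z ^ 2) y w) x w =
        2 * c * fderiv ℝ f x w ^ 2 + 2 * c * f x * fderiv ℝ (fun y => fderiv ℝ f y w) x w := by
    intro w
    simp only [hfderiv, smul_apply, smul_eq_mul]
    rw [fderiv_fun_mul ((hf x).const_mul (2 * c)) (hf'.clm_apply (differentiableAt_const w)),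
      fderiv_const_mul (hf x)]
    simp only [add_apply, smul_apply, smul_eq_mul]
    ring
  simp only [lap, hpartial, Finset.sum_add_distrib, ← Finset.mul_sum, norm_gradient_sq_eq_sum]
  ring

theorem HasDerivAt.exp_mul_sq_comp {ζ σ g : ℝ → ℝ} {ζ' σ' g' a : ℝ}
    (hζ : HasDerivAt ζ ζ' a) (hσ : HasDerivAt σ σ' a) (hg : HasDerivAt g g' (σ a)) :
    HasDerivAt (fun t => Real.exp (ζ t) * g (σ t) ^ 2)
      (Real.exp (ζ a) * (ζ' * g (σ a) ^ 2 + 2 * g (σ a) * g' * σ')) a := by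
  refine (hζ.exp.mul ((hg.comp a hσ).pow 2)).congr_deriv ?_
  simp only [Pi.pow_apply, Function.comp_apply, Nat.cast_ofNat]
  ring

theorem change_of_time_variable_general (m : ℕ) (n : ℕ)
    (I : Set ℝ) (hI : I ⊆ Set.Ioi (0 : ℝ))
    (γ ζ σ : ℝ → ℝ)
    (hζ : ∀ a ∈ I, HasDerivAt ζ (-((m : ℝ) - 1) * γ a / a) a)
    (hσ : ∀ a ∈ I, HasDerivAt σ (-(((m : ℝ) - 2) / 2) * Real.exp (-ζ a) / a ^ 3) a)
    (J : Set ℝ) (hJ : σ '' I ⊆ J)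
    (v : ℝ → EuclideanSpace ℝ (Fin n) → ℝ)
    (hpos : ∀ s ∈ J, ∀ x, 0 < v s x)
    (hdiff_s : ∀ x, ∀ s ∈ J, DifferentiableAt ℝ (fun t => v t x) s)
    (hdiff_x : ∀ s ∈ J, Differentiable ℝ (v s) ∧ Differentiable ℝ (fderiv ℝ (v s)))
    (hpde : ∀ s ∈ J, ∀ x,
      deriv (fun t => v t x) s =
        lap (v s) x / (v s x) ^ 2 - 2 * ‖gradient (v s) x‖ ^ 2 / (v s x) ^ 3)
    (ρ : ℝ → EuclideanSpace ℝ (Fin n) → ℝ)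
    (hρ : ∀ a x, ρ a x = Real.exp (ζ a) * (v (σ a) x) ^ 2) :
    ∀ a ∈ I, ∀ x,
      a * deriv (fun t => ρ t x) a =
        -((m : ℝ) - 1) * γ a * ρ a x +
          (((m : ℝ) - 2) / (2 * a ^ 2)) *
            ((3 / 2) * ‖gradient (ρ a) x‖ ^ 2 / (ρ a x) ^ 2 - lap (ρ a) x / ρ a x) := by
  intro a ha x
  have hs : σ a ∈ J := hJ ⟨a, ha, rfl⟩
  obtain ⟨hvx, hvx'⟩ := hdiff_x _ hs
  have hρt : (fun t => ρ t x) = fun t => Real.exp (ζ t) * v (σ t) x ^ 2 := funext (hρ · x)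
  have hρa : ρ a = fun y => Real.exp (ζ a) * v (σ a) y ^ 2 := funext (hρ a)
  rw [hρt, ((hζ a ha).exp_mul_sq_comp (hσ a ha) (hdiff_s x _ hs).hasDerivAt).deriv, hρa,
    norm_gradient_const_mul_sq _ (hvx x), lap_const_mul_sq _ hvx (hvx' x), hpde _ hs x,
    Real.exp_neg]
  have ha0 : a ≠ 0 := (hI ha).ne'
  have hv0 : v (σ a) x ≠ 0 := (hpos _ hs x).ne'
  have he0 : Real.exp (ζ a) ≠ 0 := (Real.exp_pos _).ne'
  field_simp
  ring

/-- Change of time variable: a positive solution `v` of `∂v/∂s = v⁻² Δv − 2 v⁻³ |∇v|²`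
gives, via `ρ(a,x) = e^{ζ(a)} v(σ(a),x)²` with `ζ' = −(m−1)γ/a` and
`σ' = −((m−2)/2) e^{−ζ}/a³`, a solution of the continuity equation
`a ∂ρ/∂a = −(m−1) γ ρ + ((m−2)/(2a²)) ( (3/2)|∇ρ|²/ρ² − Δρ/ρ )`. -/
theorem change_of_time_variable (m : ℕ) (hm : 3 ≤ m) (n : ℕ) (hn : n = m - 1)
    (I : Set ℝ) (hI : I ⊆ Set.Ioi (0 : ℝ)) (hIinterval : I.OrdConnected)
    (γ ζ σ : ℝ → ℝ) (hγ : ContinuousOn γ I)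
    (hζ : ∀ a ∈ I, HasDerivAt ζ (-((m : ℝ) - 1) * γ a / a) a)
    (hσ : ∀ a ∈ I, HasDerivAt σ (-(((m : ℝ) - 2) / 2) * Real.exp (-ζ a) / a ^ 3) a)
    (J : Set ℝ) (hJ : σ '' I ⊆ J)
    (v : ℝ → EuclideanSpace ℝ (Fin n) → ℝ)
    (hpos : ∀ s ∈ J, ∀ x, 0 < v s x)
    (hdiff_s : ∀ x, ∀ s ∈ J, DifferentiableAt ℝ (fun t => v t x) s)
    (hdiff_x : ∀ s ∈ J, Differentiable ℝ (v s) ∧ Differentiable ℝ (fderiv ℝ (v s)))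
    (hpde : ∀ s ∈ J, ∀ x,
      deriv (fun t => v t x) s =
        lap (v s) x / (v s x) ^ 2 - 2 * ‖gradient (v s) x‖ ^ 2 / (v s x) ^ 3)
    (ρ : ℝ → EuclideanSpace ℝ (Fin n) → ℝ)
    (hρ : ∀ a x, ρ a x = Real.exp (ζ a) * (v (σ a) x) ^ 2) :
    ∀ a ∈ I, ∀ x,
      a * deriv (fun t => ρ t x) a =
        -((m : ℝ) - 1) * γ a * ρ a x +
          (((m : ℝ) - 2) / (2 * a ^ 2)) *
            ((3 / 2) * ‖gradient (ρ a) x‖ ^ 2 / (ρ a x) ^ 2 - lap (ρ a) x / ρ a x) :=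
  change_of_time_variable_general m n I hI γ ζ σ hζ hσ J hJ v hpos hdiff_s hdiff_x hpde ρ hρ
end
end

section
/- The implicit travelling-wave ansatz solves the parabolic equation (verification of equation (28) of the paper): Let n ≥ 1, k ∈ ℝⁿ with k ≠ 0, λ, c₁, v₀ ∈ ℝ with c₁ ≠ 0 and v₀ > 0. Let U ⊆ ℝ × ℝⁿ be open and v : U → ℝ be continuously differentiable in s and twice continuously differentiable in x, everywhere positive, such that for every (s,x) ∈ U and every u in the closed interval with endpoints v₀ and v(s,x) one has u > 0 and λu + c₁ ≠ 0, and such that |k|² ∫_{v₀}^{v(s,x)} du/(u²(λu + c₁)) = λ s + k·x for all (s,x) ∈ U. Then v satisfies ∂v/∂s = v⁻² Δv − 2 v⁻³ |∇v|² at every point of U. -/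
/-!
Put `F w = |k|² ∫_{v₀}^w du / (u² (λu + c₁))`, so that the ansatz says `F (v s x) = λ s + k·x`
on a neighbourhood of every point of `U`. Since `F' = 1 / g` with `g w = w² (λw + c₁) / |k|²`
nonvanishing along `v`, differentiating the ansatz gives `∂ₛv = λ g(v)` and `∇v = g(v) k`.
Differentiating `∇v = g(v) k` once more gives `Δv = g'(v) g(v) |k|²`, and the equation becomes
the polynomial identity `λ g = g' g |k|² / v² - 2 g² |k|² / v³`.
-/

open scoped RealInnerProductSpace

noncomputable section

open Filter Topology Set

theorem hasDerivAt_integral_one_div {p : ℝ → ℝ} {a b : ℝ} (hp : Continuous p)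
    (h : ∀ u ∈ uIcc a b, p u ≠ 0) :
    HasDerivAt (fun w => ∫ u in a..w, 1 / p u) (1 / p b) b := by
  have hS : IsOpen {u | p u ≠ 0} := isOpen_compl_singleton.preimage hp
  have hcont : ContinuousOn (fun u => 1 / p u) {u | p u ≠ 0} :=
    continuousOn_const.div hp.continuousOn fun _ hu => hu
  have hb : p b ≠ 0 := h b right_mem_uIcc
  exact intervalIntegral.integral_hasDerivAt_right (hcont.mono h).intervalIntegrable
    (hcont.stronglyMeasurableAtFilter hS b hb) (hcont.continuousAt (hS.mem_nhds hb))

theorem hasDerivAt_cubic_div (l c₁ κ c : ℝ) :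
    HasDerivAt (fun w => w ^ 2 * (l * w + c₁) / κ) ((3 * l * c ^ 2 + 2 * c₁ * c) / κ) c :=
  (((hasDerivAt_pow 2 c).mul (((hasDerivAt_id' c).const_mul l).add_const c₁)).div_const
    κ).congr_deriv (by ring)

theorem hasDerivAt_mul_integral_one_div_cubic {κ l c₁ a b : ℝ}
    (h : ∀ u ∈ uIcc a b, u ≠ 0 ∧ l * u + c₁ ≠ 0) :
    HasDerivAt (fun w => κ * ∫ u in a..w, 1 / (u ^ 2 * (l * u + c₁)))
      (b ^ 2 * (l * b + c₁) / κ)⁻¹ b :=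
  ((hasDerivAt_integral_one_div (by fun_prop) fun u hu =>
    mul_ne_zero (pow_ne_zero 2 (h u hu).1) (h u hu).2).const_mul κ).congr_deriv
    (by rw [inv_div, mul_one_div])

theorem HasDerivAt.hasGradientAt_of_comp_eventuallyEq {E : Type*} [NormedAddCommGroup E]
    [InnerProductSpace ℝ E] [CompleteSpace E] {F : ℝ → ℝ} {F' : ℝ} {φ ψ : E → ℝ} {K x : E}
    (hF : HasDerivAt F F' (φ x)) (hF' : F' ≠ 0) (hφ : DifferentiableAt ℝ φ x)
    (hψ : HasGradientAt ψ K x) (h : ∀ᶠ y in 𝓝 x, F (φ y) = ψ y) :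
    HasGradientAt φ (F'⁻¹ • K) x := by
  have hcomp : HasFDerivAt (fun y => F (φ y)) (F' • fderiv ℝ φ x) x :=
    hF.comp_hasFDerivAt x hφ.hasFDerivAt
  have hK : F' • fderiv ℝ φ x = InnerProductSpace.toDual ℝ E K :=
    (hcomp.congr_of_eventuallyEq (h.mono fun _ hy => hy.symm)).unique hψ
  rw [hasGradientAt_iff_hasFDerivAt, map_smul, ← hK, smul_smul, inv_mul_cancel₀ hF', one_smul]
  exact hφ.hasFDerivAt

theorem hasGradientAt_const_add_inner {n : ℕ} (a : ℝ) (k x : EuclideanSpace ℝ (Fin n)) :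
    HasGradientAt (fun y => a + ⟪k, y⟫) k x :=
  (innerSL ℝ k).hasFDerivAt.const_add a

theorem lap_eq_of_hasGradientAt_eq_smul {n : ℕ} {f : EuclideanSpace ℝ (Fin n) → ℝ}
    {G : ℝ → ℝ} {G' : ℝ} {k x : EuclideanSpace ℝ (Fin n)} (hG : HasDerivAt G G' (f x))
    (hf : ∀ᶠ y in 𝓝 x, HasGradientAt f (G (f y) • k) y) :
    lap f x = G' * G (f x) * ‖k‖ ^ 2 := by
  have hpartial : ∀ i, (fun y => fderiv ℝ f y (EuclideanSpace.single i 1)) =ᶠ[𝓝 x]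
      fun y => G (f y) * k i := fun i => hf.mono fun y hy => by
    simp [hy.fderiv_apply, EuclideanSpace.inner_single_right]
  have hfx : HasGradientAt f (G (f x) • k) x := hf.self_of_nhds
  have hterm : ∀ i, fderiv ℝ (fun y => fderiv ℝ f y (EuclideanSpace.single i 1)) x
      (EuclideanSpace.single i 1) = G' * G (f x) * k i ^ 2 := fun i => by
    have hchain : HasFDerivAt (fun y => G (f y) * k i) (k i • G' • fderiv ℝ f x) x :=
      (hG.comp_hasFDerivAt x hfx.differentiableAt.hasFDerivAt).mul_const (k i)
    rw [(hpartial i).fderiv_eq, hchain.fderiv]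
    simp [hfx.fderiv_apply, EuclideanSpace.inner_single_right]
    ring
  simp only [lap, hterm, ← Finset.mul_sum, EuclideanSpace.real_norm_sq_eq]

theorem travelling_wave_ansatz_solves_general (n : ℕ)
    (k : EuclideanSpace ℝ (Fin n)) (hk : k ≠ 0)
    (l c₁ v₀ : ℝ)
    (U : Set (ℝ × EuclideanSpace ℝ (Fin n))) (hU : IsOpen U)
    (v : ℝ → EuclideanSpace ℝ (Fin n) → ℝ)
    (hreg_s : ∀ s x, (s, x) ∈ U → ContDiffAt ℝ 1 (fun t => v t x) s)
    (hreg_x : ∀ s x, (s, x) ∈ U → ContDiffAt ℝ 2 (v s) x)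
    (hdom : ∀ s x, (s, x) ∈ U → ∀ u ∈ Set.uIcc v₀ (v s x), 0 < u ∧ l * u + c₁ ≠ 0)
    (hansatz : ∀ s x, (s, x) ∈ U →
      ‖k‖ ^ 2 * ∫ u in v₀..(v s x), 1 / (u ^ 2 * (l * u + c₁)) = l * s + ⟪k, x⟫) :
    ∀ s x, (s, x) ∈ U →
      deriv (fun t => v t x) s =
        lap (v s) x / (v s x) ^ 2 - 2 * ‖gradient (v s) x‖ ^ 2 / (v s x) ^ 3 := by
  have hslice : ∀ s x, (s, x) ∈ U → ∀ᶠ y in 𝓝 x, (s, y) ∈ U := fun s _ hsx =>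
    (Continuous.prodMk_right s).continuousAt.eventually_mem (hU.mem_nhds hsx)
  have hne : ∀ s x, (s, x) ∈ U → ∀ u ∈ uIcc v₀ (v s x), u ≠ 0 ∧ l * u + c₁ ≠ 0 :=
    fun s x hsx u hu => ⟨(hdom s x hsx u hu).1.ne', (hdom s x hsx u hu).2⟩
  set g : ℝ → ℝ := fun w => w ^ 2 * (l * w + c₁) / ‖k‖ ^ 2 with hg
  have hg_ne : ∀ s x, (s, x) ∈ U → (g (v s x))⁻¹ ≠ 0 := fun s x hsx => by
    obtain ⟨hv, hlv⟩ := hne s x hsx _ right_mem_uIcc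
    simp only [hg]
    positivity
  have hF : ∀ s x, (s, x) ∈ U → HasDerivAt
      (fun w => ‖k‖ ^ 2 * ∫ u in v₀..w, 1 / (u ^ 2 * (l * u + c₁))) (g (v s x))⁻¹ (v s x) :=
    fun s x hsx => hasDerivAt_mul_integral_one_div_cubic (hne s x hsx)
  have hgrad : ∀ s x, (s, x) ∈ U → HasGradientAt (v s) (g (v s x) • k) x := fun s x hsx => by
    simpa using (hF s x hsx).hasGradientAt_of_comp_eventuallyEq (hg_ne s x hsx)
      ((hreg_x s x hsx).differentiableAt two_ne_zero) (hasGradientAt_const_add_inner (l * s) k x)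
      ((hslice s x hsx).mono fun y => hansatz s y)
  intro s x hsx
  have htime : HasDerivAt (fun t => v t x) (g (v s x) * l) s := by
    simpa using ((hF s x hsx).hasGradientAt_of_comp_eventuallyEq (φ := fun t => v t x)
      (hg_ne s x hsx) ((hreg_s s x hsx).differentiableAt one_ne_zero)
      (((hasDerivAt_id s).const_mul l).add_const ⟪k, x⟫).hasGradientAt'
      (((Continuous.prodMk_left x).continuousAt.eventually_mem (hU.mem_nhds hsx)).mono
        fun t => hansatz t x)).hasDerivAt'
  have hv : v s x ≠ 0 := (hne s x hsx _ right_mem_uIcc).1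
  rw [htime.deriv, lap_eq_of_hasGradientAt_eq_smul (hasDerivAt_cubic_div l c₁ _ _)
    ((hslice s x hsx).mono fun y => hgrad s y), (hgrad s x hsx).gradient, norm_smul, mul_pow,
    Real.norm_eq_abs, sq_abs, hg]
  field_simp
  ring

/-- The implicit travelling-wave ansatz
`|k|² ∫_{v₀}^{v(s,x)} du/(u²(λu + c₁)) = λ s + k·x`
solves the parabolic equation `∂v/∂s = v⁻² Δv − 2 v⁻³ |∇v|²`. -/
theorem travelling_wave_ansatz_solves (n : ℕ) (hn : 1 ≤ n)
    (k : EuclideanSpace ℝ (Fin n)) (hk : k ≠ 0)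
    (l c₁ v₀ : ℝ) (hc₁ : c₁ ≠ 0) (hv₀ : 0 < v₀)
    (U : Set (ℝ × EuclideanSpace ℝ (Fin n))) (hU : IsOpen U)
    (v : ℝ → EuclideanSpace ℝ (Fin n) → ℝ)
    (hreg_s : ∀ s x, (s, x) ∈ U → ContDiffAt ℝ 1 (fun t => v t x) s)
    (hreg_x : ∀ s x, (s, x) ∈ U → ContDiffAt ℝ 2 (v s) x)
    (hpos : ∀ s x, (s, x) ∈ U → 0 < v s x)
    (hdom : ∀ s x, (s, x) ∈ U → ∀ u ∈ Set.uIcc v₀ (v s x), 0 < u ∧ l * u + c₁ ≠ 0)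
    (hansatz : ∀ s x, (s, x) ∈ U →
      ‖k‖ ^ 2 * ∫ u in v₀..(v s x), 1 / (u ^ 2 * (l * u + c₁)) = l * s + ⟪k, x⟫) :
    ∀ s x, (s, x) ∈ U →
      deriv (fun t => v t x) s =
        lap (v s) x / (v s x) ^ 2 - 2 * ‖gradient (v s) x‖ ^ 2 / (v s x) ^ 3 :=
  travelling_wave_ansatz_solves_general n k hk l c₁ v₀ U hU v hreg_s hreg_x hdom hansatz
end
end

section
/- Explicit travelling-wave solution in the case c₁ = 0: Let n ≥ 1, k ∈ ℝⁿ with k ≠ 0, λ ∈ ℝ and v₀ > 0. On the open set U := { (s,x) ∈ ℝ × ℝⁿ : |k|² − 2 λ v₀² (λ s + k·x) > 0 }, define v(s,x) := v₀ |k| / √( |k|² − 2 λ v₀² (λ s + k·x) ). Then v is positive and satisfies ∂v/∂s = v⁻² Δv − 2 v⁻³ |∇v|² at every point of U. -/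
/-!
Write `v(s, x) = φ(λs + k·x)` with `φ(w) = c / √(R - Bw)`, where `c = v₀|k|`, `R = |k|²` and
`B = 2λv₀²`. For such a ridge function `∂ₛv = λφ'`, `∇v = φ' k` and `Δv = φ'' |k|²`. Differentiating
`c / √(R - Bw)^m` gives `(cmB/2) / √(R - Bw)^(m+2)`, so every term of the equation is a multiple of
`1 / √(R - Bw)^3`, and comparing coefficients leaves `2λc² = |k|²B`, which is `2λv₀²|k|² = |k|²·2λv₀²`.
-/

open scoped RealInnerProductSpace

noncomputable section

open Filter Topology

theorem HasDerivAt.comp_mul_add {f : ℝ → ℝ} {f' l b s : ℝ} (hf : HasDerivAt f f' (l * s + b)) :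
    HasDerivAt (fun t => f (l * t + b)) (l * f') s :=
  (hf.comp s (((hasDerivAt_id' s).const_mul l).add_const b)).congr_deriv (by ring)

section Ridge

variable {E : Type*} [NormedAddCommGroup E] [InnerProductSpace ℝ E]

theorem hasFDerivAt_comp_add_inner {f : ℝ → ℝ} {f' a : ℝ} {k x : E}
    (hf : HasDerivAt f f' (a + ⟪k, x⟫)) :
    HasFDerivAt (fun y => f (a + ⟪k, y⟫)) (f' • innerSL ℝ k) x :=
  hf.comp_hasFDerivAt x ((innerSL ℝ k).hasFDerivAt.const_add a)

theorem hasGradientAt_comp_add_inner [CompleteSpace E] {f : ℝ → ℝ} {f' a : ℝ} {k x : E}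
    (hf : HasDerivAt f f' (a + ⟪k, x⟫)) :
    HasGradientAt (fun y => f (a + ⟪k, y⟫)) (f' • k) x := by
  rw [hasGradientAt_iff_hasFDerivAt]
  refine (hasFDerivAt_comp_add_inner hf).congr_fderiv ?_
  ext y
  simp

end Ridge

theorem lap_comp_add_inner {n : ℕ} {f f' : ℝ → ℝ} {f'' a : ℝ} {k x : EuclideanSpace ℝ (Fin n)}
    (hf : ∀ᶠ t in 𝓝 (a + ⟪k, x⟫), HasDerivAt f (f' t) t)
    (hf' : HasDerivAt f' f'' (a + ⟪k, x⟫)) :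
    lap (fun y => f (a + ⟪k, y⟫)) x = f'' * ‖k‖ ^ 2 := by
  have hf_near : ∀ᶠ y in 𝓝 x, HasDerivAt f (f' (a + ⟪k, y⟫)) (a + ⟪k, y⟫) :=
    ((continuous_const.add (innerSL ℝ k).continuous).tendsto x).eventually hf
  have hpartial (i : Fin n) :
      fderiv ℝ (fun y => fderiv ℝ (fun y => f (a + ⟪k, y⟫)) y (EuclideanSpace.single i 1)) x
        (EuclideanSpace.single i 1) = f'' * k i ^ 2 := by
    have hfirst : (fun y => fderiv ℝ (fun y => f (a + ⟪k, y⟫)) y (EuclideanSpace.single i 1))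
        =ᶠ[𝓝 x] fun y => f' (a + ⟪k, y⟫) * k i := by
      filter_upwards [hf_near] with y hy
      simp [(hasFDerivAt_comp_add_inner hy).fderiv, EuclideanSpace.inner_single_right]
    rw [hfirst.fderiv_eq, ((hasFDerivAt_comp_add_inner hf').mul_const (k i)).fderiv]
    simp [EuclideanSpace.inner_single_right]
    ring
  simp only [lap, hpartial, ← Finset.mul_sum, EuclideanSpace.real_norm_sq_eq]

def waveProfile (c R B : ℝ) (m : ℕ) (w : ℝ) : ℝ := c / √(R - B * w) ^ m

section WaveProfile

variable {c R B w : ℝ}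

theorem waveProfile_pos (hc : 0 < c) (hw : 0 < R - B * w) (m : ℕ) :
    0 < waveProfile c R B m w := by
  unfold waveProfile
  have := Real.sqrt_pos.mpr hw
  positivity

theorem hasDerivAt_waveProfile (m : ℕ) (hw : 0 < R - B * w) :
    HasDerivAt (waveProfile c R B m) (waveProfile (c * m * B / 2) R B (m + 2) w) w := by
  have hsqrt : HasDerivAt (fun w => √(R - B * w)) (1 / (2 * √(R - B * w)) * -B) w :=
    (Real.hasDerivAt_sqrt hw.ne').comp w
      (by simpa using ((hasDerivAt_id w).const_mul B).const_sub R)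
  have hr : 0 < √(R - B * w) := Real.sqrt_pos.mpr hw
  refine ((hasDerivAt_const w c).div (hsqrt.pow m) (pow_pos hr m).ne').congr_deriv ?_
  simp only [waveProfile, Pi.pow_apply]
  generalize √(R - B * w) = r at hr ⊢
  rcases m with _ | m
  · simp
  · field_simp
    simp only [Nat.add_sub_cancel]
    ring

theorem eventually_hasDerivAt_waveProfile (m : ℕ) (hw : 0 < R - B * w) :
    ∀ᶠ w' in 𝓝 w,
      HasDerivAt (waveProfile c R B m) (waveProfile (c * m * B / 2) R B (m + 2) w') w' := by
  have : ∀ᶠ w' in 𝓝 w, 0 < R - B * w' :=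
    continuousAt_const.eventually_lt (by fun_prop) hw
  exact this.mono fun w' hw' => hasDerivAt_waveProfile m hw'

theorem waveProfile_ode {l K : ℝ} (hc : c ≠ 0) (hw : 0 < R - B * w) (h : 2 * l * c ^ 2 = K * B) :
    l * waveProfile (c * B / 2) R B 3 w =
      waveProfile (c * B / 2 * 3 * B / 2) R B 5 w * K / waveProfile c R B 1 w ^ 2 -
        2 * (waveProfile (c * B / 2) R B 3 w ^ 2 * K) / waveProfile c R B 1 w ^ 3 := by
  have hr : √(R - B * w) ≠ 0 := (Real.sqrt_pos.mpr hw).ne'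
  simp only [waveProfile]
  generalize √(R - B * w) = r at hr ⊢
  field_simp
  linear_combination B * h

end WaveProfile

theorem travelling_wave_explicit_general (n : ℕ)
    (k : EuclideanSpace ℝ (Fin n)) (hk : k ≠ 0)
    (l v₀ : ℝ) (hv₀ : 0 < v₀)
    (v : ℝ → EuclideanSpace ℝ (Fin n) → ℝ)
    (hv : ∀ s x, v s x =
      v₀ * ‖k‖ / Real.sqrt (‖k‖ ^ 2 - 2 * l * v₀ ^ 2 * (l * s + ⟪k, x⟫))) :
    ∀ s : ℝ, ∀ x : EuclideanSpace ℝ (Fin n),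
      0 < ‖k‖ ^ 2 - 2 * l * v₀ ^ 2 * (l * s + ⟪k, x⟫) →
      0 < v s x ∧
      deriv (fun t => v t x) s =
        lap (v s) x / (v s x) ^ 2 - 2 * ‖gradient (v s) x‖ ^ 2 / (v s x) ^ 3 := by
  intro s x hw
  set φ := waveProfile (v₀ * ‖k‖) (‖k‖ ^ 2) (2 * l * v₀ ^ 2)
  have hvφ : v = fun t y => φ 1 (l * t + ⟪k, y⟫) := by
    funext t y
    simp [hv, φ, waveProfile]
  have hc : 0 < v₀ * ‖k‖ := mul_pos hv₀ (norm_pos_iff.mpr hk)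
  have hφ := eventually_hasDerivAt_waveProfile (c := v₀ * ‖k‖) 1 hw
  have hφ' := hasDerivAt_waveProfile (c := v₀ * ‖k‖ * (2 * l * v₀ ^ 2) / 2) 3 hw
  simp only [Nat.cast_one, mul_one, Nat.reduceAdd, Nat.cast_ofNat] at hφ hφ'
  subst hvφ
  refine ⟨waveProfile_pos hc hw 1, ?_⟩
  rw [hφ.self_of_nhds.comp_mul_add.deriv, (hasGradientAt_comp_add_inner hφ.self_of_nhds).gradient,
    lap_comp_add_inner hφ hφ', norm_smul, mul_pow, Real.norm_eq_abs, sq_abs]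
  exact waveProfile_ode hc.ne' hw (by ring)

/-- Explicit travelling-wave solution in the case `c₁ = 0`:
`v(s,x) = v₀ |k| / √(|k|² − 2λv₀²(λs + k·x))` is positive and solves
`∂v/∂s = v⁻² Δv − 2 v⁻³ |∇v|²` on the set where the radicand is positive. -/
theorem travelling_wave_explicit (n : ℕ) (hn : 1 ≤ n)
    (k : EuclideanSpace ℝ (Fin n)) (hk : k ≠ 0)
    (l v₀ : ℝ) (hv₀ : 0 < v₀)
    (v : ℝ → EuclideanSpace ℝ (Fin n) → ℝ)
    (hv : ∀ s x, v s x =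
      v₀ * ‖k‖ / Real.sqrt (‖k‖ ^ 2 - 2 * l * v₀ ^ 2 * (l * s + ⟪k, x⟫))) :
    ∀ s : ℝ, ∀ x : EuclideanSpace ℝ (Fin n),
      0 < ‖k‖ ^ 2 - 2 * l * v₀ ^ 2 * (l * s + ⟪k, x⟫) →
      0 < v s x ∧
      deriv (fun t => v t x) s =
        lap (v s) x / (v s x) ^ 2 - 2 * ‖gradient (v s) x‖ ^ 2 / (v s x) ^ 3 :=
  travelling_wave_explicit_general n k hk l v₀ hv₀ v hv
end
end

section
/- Exact dust solution in dimension m = 3 (verification of equation (33) of the paper, without the absolute value, on its domain of positivity): Let k = (k₁,k₂) ∈ ℝ² with k ≠ 0, λ ∈ ℝ and ν₀ > 0. On the open set U := { (a,x,y) ∈ (0,∞) × ℝ² : |k|² + λ ν₀² ( λ ln a − 2(k₁ x + k₂ y) ) > 0 }, define ρ(a,x,y) := ν₀² |k|² / ( a² ( |k|² + λ ν₀² ( λ ln a − 2(k₁ x + k₂ y) ) ) ). Then ρ is positive and satisfies a ∂ρ/∂a = −2ρ + (1/(2a²)) ( (3/2) |∇ρ|²/ρ² − Δρ/ρ ) at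 every point of U, where |k|² = k₁² + k₂². -/
open scoped RealInnerProductSpace

noncomputable section

/-!
For fixed `a`, `ρ a` is a function `g(⟪k, p⟫)` of the single variable `⟪k, p⟫`, so its gradient
is `g' • k` and its Laplacian is `g'' ‖k‖²`. Here `g = C / D` with `D` affine of slope
`c = -2λν₀²`, and then `(3/2) g'² / g² - g'' / g = -c² / (2 D²)` does not depend on `C`: the
spatial term is `-λ²ν₀⁴|k|² / (a² D²)`. In time, `ρ = ν₀²|k|² / (a² D)` with `a ∂ₐ D = λ²ν₀²`,
so `a ∂ₐ ρ = -2ρ - λ²ν₀⁴|k|² / (a² D²)` as well.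
-/

open Filter Topology

theorem hasFDerivAt_comp_inner {E : Type*} [NormedAddCommGroup E] [InnerProductSpace ℝ E]
    {g : ℝ → ℝ} {g' : ℝ} {k p : E} (hg : HasDerivAt g g' ⟪k, p⟫) :
    HasFDerivAt (fun q => g ⟪k, q⟫) (g' • innerSL ℝ k) p :=
  hg.comp_hasFDerivAt p (innerSL ℝ k).hasFDerivAt

theorem hasGradientAt_comp_inner {E : Type*} [NormedAddCommGroup E] [InnerProductSpace ℝ E]
    [CompleteSpace E] {g : ℝ → ℝ} {g' : ℝ} {k p : E} (hg : HasDerivAt g g' ⟪k, p⟫) :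
    HasGradientAt (fun q => g ⟪k, q⟫) (g' • k) p := by
  rw [hasGradientAt_iff_hasFDerivAt, map_smul]
  exact hasFDerivAt_comp_inner hg

theorem lap_comp_inner {n : ℕ} {g g' : ℝ → ℝ} {g'' : ℝ} {k p : EuclideanSpace ℝ (Fin n)}
    (hg : ∀ᶠ t in 𝓝 ⟪k, p⟫, HasDerivAt g (g' t) t) (hg' : HasDerivAt g' g'' ⟪k, p⟫) :
    lap (fun q => g ⟪k, q⟫) p = g'' * ‖k‖ ^ 2 := by
  have hnear : ∀ᶠ q in 𝓝 p, HasDerivAt g (g' ⟪k, q⟫) ⟪k, q⟫ :=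
    ((continuous_const.inner continuous_id).tendsto p).eventually hg
  have hsecond (v : EuclideanSpace ℝ (Fin n)) :
      fderiv ℝ (fun y => fderiv ℝ (fun q => g ⟪k, q⟫) y v) p v = g'' * ⟪k, v⟫ ^ 2 := by
    have hfirst : (fun y => fderiv ℝ (fun q => g ⟪k, q⟫) y v) =ᶠ[𝓝 p]
        fun y => g' ⟪k, y⟫ * ⟪k, v⟫ := by
      filter_upwards [hnear] with q hq
      simp only [(hasFDerivAt_comp_inner hq).fderiv, smul_apply,
        coe_innerSL_apply, smul_eq_mul]
    rw [hfirst.fderiv_eq, ((hasFDerivAt_comp_inner hg').mul_const ⟪k, v⟫).fderiv]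
    simp only [smul_apply, coe_innerSL_apply, smul_eq_mul]
    ring
  simp only [lap, hsecond, ← Finset.mul_sum, EuclideanSpace.real_norm_sq_eq,
    EuclideanSpace.inner_single_right]
  simp

theorem hasDerivAt_div_affine (C A c t : ℝ) (h : A + c * t ≠ 0) :
    HasDerivAt (fun t => C / (A + c * t)) (-(C * c) / (A + c * t) ^ 2) t := by
  have hden := ((hasDerivAt_id' t).const_mul c).const_add A
  refine ((hasDerivAt_const t C).fun_div hden h).congr_deriv ?_
  ring

theorem hasDerivAt_div_affine_sq (C A c t : ℝ) (h : A + c * t ≠ 0) :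
    HasDerivAt (fun t => -(C * c) / (A + c * t) ^ 2) (2 * C * c ^ 2 / (A + c * t) ^ 3) t := by
  have hsq := (((hasDerivAt_id' t).const_mul c).const_add A).fun_pow 2
  refine ((hasDerivAt_const t (-(C * c))).fun_div hsq (pow_ne_zero 2 h)).congr_deriv ?_
  field_simp
  ring

theorem sq_norm_gradient_sub_lap_div_affine_inner {n : ℕ} {f : EuclideanSpace ℝ (Fin n) → ℝ}
    {C A c : ℝ} {k p : EuclideanSpace ℝ (Fin n)} (hf : ∀ q, f q = C / (A + c * ⟪k, q⟫))
    (hC : C ≠ 0) (hp : A + c * ⟪k, p⟫ ≠ 0) :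
    (3 / 2) * ‖gradient f p‖ ^ 2 / f p ^ 2 - lap f p / f p =
      -(c ^ 2 * ‖k‖ ^ 2 / (2 * (A + c * ⟪k, p⟫) ^ 2)) := by
  obtain rfl : f = fun q => C / (A + c * ⟪k, q⟫) := funext hf
  have hnear : ∀ᶠ t in 𝓝 ⟪k, p⟫, A + c * t ≠ 0 :=
    (continuous_const.add (continuous_const.mul continuous_id)).continuousAt.eventually_ne hp
  have hgrad := (hasGradientAt_comp_inner (hasDerivAt_div_affine C A c _ hp)).gradient
  have hlap := lap_comp_inner (hnear.mono fun t ht => hasDerivAt_div_affine C A c t ht)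
    (hasDerivAt_div_affine_sq C A c _ hp)
  rw [hgrad, hlap, norm_smul, Real.norm_eq_abs, mul_pow, sq_abs]
  field_simp
  ring

theorem hasDerivAt_div_sq_mul_log (C B β : ℝ) {a : ℝ} (ha : a ≠ 0) (h : B + β * Real.log a ≠ 0) :
    HasDerivAt (fun t => C / (t ^ 2 * (B + β * Real.log t)))
      (-(C * (2 * (B + β * Real.log a) + β)) / (a ^ 3 * (B + β * Real.log a) ^ 2)) a := by
  have hden := (hasDerivAt_pow 2 a).fun_mul (((Real.hasDerivAt_log ha).const_mul β).const_add B)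
  refine ((hasDerivAt_const a C).fun_div hden (mul_ne_zero (pow_ne_zero 2 ha) h)).congr_deriv ?_
  field_simp
  ring

/-- Exact dust solution in dimension `m = 3`:
`ρ(a,x,y) = ν₀²|k|²/(a²(|k|² + λν₀²(λ ln a − 2(k₁x + k₂y))))` is positive and solves
the dust continuity equation `a ∂ρ/∂a = −2ρ + (1/(2a²))((3/2)|∇ρ|²/ρ² − Δρ/ρ)` on the
set where the denominator factor is positive. -/
theorem exact_dust_solution (k₁ k₂ : ℝ) (hk : (k₁, k₂) ≠ (0, 0))
    (l ν₀ : ℝ) (hν₀ : 0 < ν₀)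
    (ρ : ℝ → EuclideanSpace ℝ (Fin 2) → ℝ)
    (hρ : ∀ a : ℝ, ∀ p : EuclideanSpace ℝ (Fin 2), ρ a p =
      ν₀ ^ 2 * (k₁ ^ 2 + k₂ ^ 2) /
        (a ^ 2 * ((k₁ ^ 2 + k₂ ^ 2) +
          l * ν₀ ^ 2 * (l * Real.log a - 2 * (k₁ * p 0 + k₂ * p 1))))) :
    ∀ a : ℝ, 0 < a → ∀ p : EuclideanSpace ℝ (Fin 2),
      0 < (k₁ ^ 2 + k₂ ^ 2) + l * ν₀ ^ 2 * (l * Real.log a - 2 * (k₁ * p 0 + k₂ * p 1)) →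
      0 < ρ a p ∧
      a * deriv (fun t => ρ t p) a =
        -2 * ρ a p + (1 / (2 * a ^ 2)) *
          ((3 / 2) * ‖gradient (ρ a) p‖ ^ 2 / (ρ a p) ^ 2 - lap (ρ a) p / ρ a p) := by
  intro a ha p hD
  have hK : 0 < k₁ ^ 2 + k₂ ^ 2 := by
    obtain h | h : k₁ ≠ 0 ∨ k₂ ≠ 0 := by contrapose! hk; simp [hk]
    all_goals positivity
  set K := k₁ ^ 2 + k₂ ^ 2
  set k : EuclideanSpace ℝ (Fin 2) := !₂[k₁, k₂]
  have hinner (q : EuclideanSpace ℝ (Fin 2)) : ⟪k, q⟫ = k₁ * q 0 + k₂ * q 1 := by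
    simp [k, PiLp.inner_apply, Fin.sum_univ_two, mul_comm]
  have hnorm : ‖k‖ ^ 2 = K := by simp [k, EuclideanSpace.real_norm_sq_eq, Fin.sum_univ_two, K]
  have hspace (q : EuclideanSpace ℝ (Fin 2)) :
      ρ a q = ν₀ ^ 2 * K / a ^ 2 /
        ((K + l ^ 2 * ν₀ ^ 2 * Real.log a) + (-2 * l * ν₀ ^ 2) * ⟪k, q⟫) := by
    rw [hρ, hinner, div_div]
    ring
  have htime : (fun t => ρ t p) = fun t => ν₀ ^ 2 * K /
      (t ^ 2 * ((K - 2 * l * ν₀ ^ 2 * (k₁ * p 0 + k₂ * p 1)) + l ^ 2 * ν₀ ^ 2 * Real.log t)) := by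
    funext t
    rw [hρ]
    ring
  set D := K + l * ν₀ ^ 2 * (l * Real.log a - 2 * (k₁ * p 0 + k₂ * p 1))
  have htime_den :
      K - 2 * l * ν₀ ^ 2 * (k₁ * p 0 + k₂ * p 1) + l ^ 2 * ν₀ ^ 2 * Real.log a = D := by
    ring
  have hspace_den : K + l ^ 2 * ν₀ ^ 2 * Real.log a + -2 * l * ν₀ ^ 2 * ⟪k, p⟫ = D := by
    rw [hinner]; ring
  have hρap : ρ a p = ν₀ ^ 2 * K / (a ^ 2 * D) := hρ a p
  refine ⟨by rw [hρap]; positivity, ?_⟩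
  rw [htime, (hasDerivAt_div_sq_mul_log _ _ _ ha.ne' (htime_den ▸ hD.ne')).deriv, htime_den,
    sq_norm_gradient_sub_lap_div_affine_inner hspace (by positivity) (hspace_den ▸ hD.ne'),
    hspace_den, hnorm, hρap]
  field_simp
  ring
end
end
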